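/- arXiv:2502.03506 — 2 statements merged into one kernel-verified Lean document; each statement's English description precedes it below -/
import Mathlib

section
/- Let r : ℕ → ℝ with r_t ≤ r_max for all t, and α ∈ [0,1]. Define f by f_{t+1} = f_t + α(r_t - f_t) if r_t > f_t, else f_{t+1} = f_t; and define f' by f'_{t+1} = f'_t + α(r_t - f'_t) if r_t = r_max, else f'_{t+1} = f'_t. If f_0 = f'_0 ≤ r_max, then for all t ≥ 0, f_t ≥ f'_t. -/
theorem optimistic_update_lower_bound
    (r : ℕ → ℝ) (rmax : ℝ) (α : ℝ) (hα : α ∈ Set.Icc (0:ℝ) 1)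
    (hub : ∀ t, r t ≤ rmax)
    (f f' : ℕ → ℝ)
    (hf : ∀ t, f (t + 1) = if r t > f t then f t + α * (r t - f t) else f t)
    (hf' : ∀ t, f' (t + 1) = if r t = rmax then f' t + α * (r t - f' t) else f' t)
    (h0 : f 0 = f' 0) (h0le : f 0 ≤ rmax) :
    ∀ t, f' t ≤ f t := by
  obtain ⟨hα0, hα1⟩ := hα
  have key : ∀ t, f' t ≤ f t ∧ f t ≤ rmax := by
    intro t
    induction t with
    | zero => exact ⟨le_of_eq h0.symm, h0le⟩
    | succ n ih =>
      obtain ⟨ih1, ih2⟩ := ih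
      rw [hf, hf']
      by_cases hr : r n = rmax
      · simp only [hr, eq_self_iff_true, if_true]
        by_cases hgt : rmax > f n
        · rw [if_pos hgt]
          constructor
          · nlinarith
          · nlinarith
        · rw [if_neg hgt]
          push_neg at hgt
          have hfe : f n = rmax := le_antisymm ih2 hgt
          constructor
          · nlinarith
          · exact ih2
      · rw [if_neg hr]
        by_cases hgt : r n > f n
        · rw [if_pos hgt]
          have := hub n
          constructor
          · nlinarith
          · nlinarith
        · rw [if_neg hgt]
          exact ⟨ih1, ih2⟩
  exact fun t => (key t).1
end

section
/- Let R : Aⁿ → ℝ be a team reward over joint actions of n ≥ 1 agents with finite action set A, let a* = (a*_1,…,a*_n) be a strict global maximizer of R (R(a) < R(a*) for all a ≠ a*), and fix any decomposition R(a*) = Σ_i r_i(a*_i). For a joint action a, define r_i(a_i | a_{-i}) = r_i(a*_i) − (R(a*) − R(a))/n. Then for any agent i and any a_i ≠ a*_i: max_{a_{-i}} r_i(a_i | a_{-i}) < max_{a_{-i}} r_i(a*_i | a_{-i}) = r_i(a*_i). -/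
theorem optimal_action_decomposition_dominates
    {A : Type*} [Fintype A] [Nonempty A] (n : ℕ) (hn : 1 ≤ n)
    (R : (Fin n → A) → ℝ) (astar : Fin n → A)
    (hstrict : ∀ a, a ≠ astar → R a < R astar)
    (r : Fin n → A → ℝ) (hdecomp : ∑ i, r i (astar i) = R astar)
    (i : Fin n) (ai : A) (hai : ai ≠ astar i) :
    (⨆ a : {a : Fin n → A // a i = ai},
        (r i (astar i) - (R astar - R a.1) / n)) <
      (⨆ a : {a : Fin n → A // a i = astar i},
        (r i (astar i) - (R astar - R a.1) / n)) ∧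
    (⨆ a : {a : Fin n → A // a i = astar i},
        (r i (astar i) - (R astar - R a.1) / n)) = r i (astar i) := by
  have hnpos : (0 : ℝ) < n := by exact_mod_cast hn
  have hRle : ∀ a : Fin n → A, R a ≤ R astar := by
    intro a
    by_cases h : a = astar
    · exact h ▸ le_refl _
    · exact (hstrict a h).le
  -- nonempty instances
  have ne1 : Nonempty {a : Fin n → A // a i = ai} :=
    ⟨⟨fun j => if j = i then ai else astar j, by simp⟩⟩
  have ne2 : Nonempty {a : Fin n → A // a i = astar i} := ⟨⟨astar, rfl⟩⟩
  have bdd2 : BddAbove (Set.range fun a : {a : Fin n → A // a i = astar i} =>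
      r i (astar i) - (R astar - R a.1) / n) := Set.Finite.bddAbove (Set.finite_range _)
  have hsup2 : (⨆ a : {a : Fin n → A // a i = astar i},
      (r i (astar i) - (R astar - R a.1) / n)) = r i (astar i) := by
    apply le_antisymm
    · apply ciSup_le
      intro a
      have : 0 ≤ (R astar - R a.1) / n := div_nonneg (by linarith [hRle a.1]) hnpos.le
      linarith
    · have := le_ciSup bdd2 (⟨astar, rfl⟩ : {a : Fin n → A // a i = astar i})
      simpa using this
  refine ⟨?_, hsup2⟩
  rw [hsup2]
  obtain ⟨a0, ha0⟩ := Finite.exists_max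
    (fun a : {a : Fin n → A // a i = ai} => r i (astar i) - (R astar - R a.1) / n)
  have hne : a0.1 ≠ astar := by
    intro h
    exact hai (by rw [← a0.2, h])
  have hlt : R a0.1 < R astar := hstrict _ hne
  have : (⨆ a : {a : Fin n → A // a i = ai},
      (r i (astar i) - (R astar - R a.1) / n)) ≤
      r i (astar i) - (R astar - R a0.1) / n := ciSup_le ha0
  have hpos : 0 < (R astar - R a0.1) / n := div_pos (by linarith) hnpos
  linarith
end
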